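/- arXiv:1301.3056 — 3 statements merged into one kernel-verified Lean document; each statement's English description precedes it below -/
import Mathlib

section
/- Let M be a symmetric (or more generally any) square matrix over a commutative ring, and for subsets I, J of indices with |I|=|J| let M(I,J) denote the minor obtained by deleting rows I and columns J. Then the Dodgson/Desnanot–Jacobi identity holds: det M(x,x)·det M(a,b) − det M·det M(ax,bx) = det M(x,b)·det M(a,x), for distinct indices a, b, x. -/
/-!
Let `C` be the identity matrix with its columns `b, x` replaced by the columns `a, x` of
`adj M`. Then `M * C` is `M` with those columns replaced by `det M • e_a` and `det M • e_x`, so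
taking determinants gives `det M` times the `2 × 2` minor of `adj M` on rows `b, x` and columns
`a, x` equal to `(det M)²` times the complementary cofactor (Jacobi). The factor `det M` cancels
for the generic matrix over `ℤ[X_ij]`, and the resulting identity specialises to every `M`.
Writing cofactors as signed minors gives Dodgson's identity; the signs agree because `a` and `b`
both precede `x`.
-/

/-- The minor `det M(I,J)` of a square matrix `M`, obtained by deleting the rows indexed by
`I` and the columns indexed by `J` (the remaining rows and columns being taken in increasing
order, which fixes the signs). -/
def matrixMinor {n k : ℕ} {R : Type*} [CommRing R] (M : Matrix (Fin n) (Fin n) R)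
    (I J : Finset (Fin n)) (hI : Iᶜ.card = k) (hJ : Jᶜ.card = k) : R :=
  Matrix.det (Matrix.of fun i j : Fin k => M (Iᶜ.orderEmbOfFin hI i) (Jᶜ.orderEmbOfFin hJ j))

namespace Matrix

section Fintype

variable {n R : Type*} [Fintype n] [DecidableEq n] [CommRing R]

theorem det_updateCol_single_one (A : Matrix n n R) (i j : n) :
    (A.updateCol j (Pi.single i 1)).det = A.adjugate j i := by
  rw [← cramer_apply, cramer_eq_adjugate_mulVec, mulVec_single_one, col_apply]

-- The matrix is `1 + U * V` with `U` of size `n × 2`; Weinstein–Aronszajn turns its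
-- determinant into that of the `2 × 2` matrix `1 + V * U = !![u b, v b; u x, v x]`.
theorem det_one_updateCol_updateCol {b x : n} (hbx : b ≠ x) (u v : n → R) :
    (((1 : Matrix n n R).updateCol b u).updateCol x v).det = u b * v x - u x * v b := by
  let U : Matrix n (Fin 2) R :=
    of fun i => ![u i - (Pi.single b 1 : n → R) i, v i - (Pi.single x 1 : n → R) i]
  let V : Matrix (Fin 2) n R := of ![Pi.single b 1, Pi.single x 1]
  have hUV : ((1 : Matrix n n R).updateCol b u).updateCol x v = 1 + U * V := by
    ext i j
    simp only [updateCol_apply, one_apply, Pi.single_apply, add_apply, mul_apply, of_apply,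
      cons_val', cons_val_fin_one, Fin.sum_univ_two, cons_val_zero, mul_ite, mul_one, mul_zero,
      cons_val_one, U, V]
    split_ifs <;> simp_all
  rw [hUV, det_one_add_mul_comm, det_fin_two]
  simp [U, V, hbx, hbx.symm, mul_comm]

theorem mulVec_adjugate_col (A : Matrix n n R) (j : n) :
    A *ᵥ A.adjugate.col j = A.det • Pi.single j 1 := by
  rw [← mulVec_single_one, mulVec_mulVec, mul_adjugate, smul_mulVec, one_mulVec]

theorem det_mul_adjugate_two_minor {b x : n} (hbx : b ≠ x) (A : Matrix n n R) (a : n) :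
    A.det * (A.adjugate x x * A.adjugate b a - A.adjugate b x * A.adjugate x a)
      = A.det * (A.det * ((A.updateCol b (Pi.single a 1)).updateCol x (Pi.single x 1)).det) := by
  let C := ((1 : Matrix n n R).updateCol b (A.adjugate.col a)).updateCol x (A.adjugate.col x)
  have hC : C.det = A.adjugate x x * A.adjugate b a - A.adjugate b x * A.adjugate x a := by
    rw [det_one_updateCol_updateCol hbx]
    simp only [col_apply]
    ring
  have hAC : A * C
      = (A.updateCol b (A.det • Pi.single a 1)).updateCol x (A.det • Pi.single x 1) := by
    rw [mul_updateCol, mul_updateCol, mul_one, mulVec_adjugate_col, mulVec_adjugate_col]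
  rw [← hC, ← det_mul, hAC, det_updateCol_smul, updateCol_comm _ hbx, det_updateCol_smul,
    updateCol_comm _ hbx.symm]

theorem adjugate_two_minor {b x : n} (hbx : b ≠ x) (A : Matrix n n R) (a : n) :
    A.adjugate x x * A.adjugate b a - A.adjugate b x * A.adjugate x a
      = A.det * ((A.updateCol b (Pi.single a 1)).updateCol x (Pi.single x 1)).det := by
  let X := mvPolynomialX n n ℤ
  let φ := MvPolynomial.aeval (R := ℤ) fun p : n × n => A p.1 p.2
  have hX : X.adjugate x x * X.adjugate b a - X.adjugate b x * X.adjugate x a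
      = X.det * ((X.updateCol b (Pi.single a 1)).updateCol x (Pi.single x 1)).det :=
    mul_left_cancel₀ (det_mvPolynomialX_ne_zero n ℤ) (det_mul_adjugate_two_minor hbx X a)
  have hφ : ∀ (B : Matrix n n (MvPolynomial (n × n) ℤ)) (i j : n),
      (B.updateCol j (Pi.single i 1)).map φ = (B.map φ).updateCol j (Pi.single i 1) := by
    intro B i j
    rw [map_updateCol]
    congr 1
    ext k
    simp [Pi.single_apply, apply_ite φ]
  have hφX := congrArg φ hX
  simp only [map_sub, map_mul] at hφX
  rw [← mvPolynomialX_mapMatrix_aeval ℤ A, AlgHom.mapMatrix_apply, ← hφ, ← hφ]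
  simp only [← AlgHom.map_det, ← AlgHom.mapMatrix_apply, ← AlgHom.map_adjugate]
  exact hφX

end Fintype

section Fin

variable {m : ℕ} {R : Type*} [CommRing R]

theorem det_submatrix_succAbove (A : Matrix (Fin (m + 1)) (Fin (m + 1)) R) (i j : Fin (m + 1)) :
    (A.submatrix i.succAbove j.succAbove).det = (-1) ^ (i + j : ℕ) * A.adjugate j i := by
  rw [adjugate_fin_succ_eq_det_submatrix, ← mul_assoc, ← pow_add, Even.neg_one_pow ⟨_, rfl⟩,
    one_mul]

theorem det_updateCol_single_one_succAbove (A : Matrix (Fin (m + 2)) (Fin (m + 2)) R)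
    (x : Fin (m + 2)) (a b : Fin (m + 1)) :
    ((A.updateCol (x.succAbove b) (Pi.single (x.succAbove a) 1)).updateCol x
      (Pi.single x 1)).det = (A.submatrix x.succAbove x.succAbove).adjugate b a := by
  have hsub : (A.updateCol (x.succAbove b) (Pi.single (x.succAbove a) 1)).submatrix
      x.succAbove x.succAbove
      = (A.submatrix x.succAbove x.succAbove).updateCol b (Pi.single a 1) := by
    ext i j
    simp [updateCol_apply, Pi.single_apply]
  rw [det_updateCol_single_one, adjugate_fin_succ_eq_det_submatrix, Even.neg_one_pow ⟨_, rfl⟩,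
    one_mul, hsub, det_updateCol_single_one]

theorem adjugate_two_minor_succAbove (A : Matrix (Fin (m + 2)) (Fin (m + 2)) R)
    (x : Fin (m + 2)) (a b : Fin (m + 1)) :
    A.adjugate x x * A.adjugate (x.succAbove b) (x.succAbove a)
        - A.adjugate (x.succAbove b) x * A.adjugate x (x.succAbove a)
      = A.det * (A.submatrix x.succAbove x.succAbove).adjugate b a := by
  rw [adjugate_two_minor (Fin.succAbove_ne x b), det_updateCol_single_one_succAbove]

theorem det_submatrix_succAbove_dodgson (A : Matrix (Fin (m + 2)) (Fin (m + 2)) R)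
    {x : Fin (m + 2)} {a b : Fin (m + 1)} (ha : x.succAbove a < x) (hb : x.succAbove b < x) :
    (A.submatrix x.succAbove x.succAbove).det
          * (A.submatrix (x.succAbove a).succAbove (x.succAbove b).succAbove).det
        - A.det * ((A.submatrix x.succAbove x.succAbove).submatrix a.succAbove b.succAbove).det
      = (A.submatrix x.succAbove (x.succAbove b).succAbove).det
          * (A.submatrix (x.succAbove a).succAbove x.succAbove).det := by
  have hval : ∀ c, x.succAbove c < x → (x.succAbove c : ℕ) = c := fun c hc => by
    rw [Fin.succAbove_of_castSucc_lt _ _ ((Fin.succAbove_lt_iff_castSucc_lt _ _).1 hc),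
      Fin.val_castSucc]
  have hx : (-1 : R) ^ (x + x : ℕ) = 1 := Even.neg_one_pow ⟨_, rfl⟩
  have key := adjugate_two_minor_succAbove A x a b
  simp only [det_submatrix_succAbove, hval a ha, hval b hb]
  linear_combination (-1 : R) ^ (a + b : ℕ) * key
    + (-1 : R) ^ (a + b : ℕ) * (A.adjugate x x * A.adjugate (x.succAbove b) (x.succAbove a)
      - A.adjugate (x.succAbove b) x * A.adjugate x (x.succAbove a)) * hx

end Fin

end Matrix

open Matrix

theorem matrixMinor_eq_det_submatrix {n k : ℕ} {R : Type*} [CommRing R]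
    (M : Matrix (Fin n) (Fin n) R) {I J : Finset (Fin n)} (hI : Iᶜ.card = k) (hJ : Jᶜ.card = k)
    {f g : Fin k → Fin n} (hf : StrictMono f) (hg : StrictMono g) (hfI : ∀ i, f i ∉ I)
    (hgJ : ∀ j, g j ∉ J) : matrixMinor M I J hI hJ = (M.submatrix f g).det := by
  rw [Finset.orderEmbOfFin_unique hI (fun i => Finset.mem_compl.2 (hfI i)) hf,
    Finset.orderEmbOfFin_unique hJ (fun j => Finset.mem_compl.2 (hgJ j)) hg]
  rfl

theorem matrixMinor_singleton {m : ℕ} {R : Type*} [CommRing R]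
    (M : Matrix (Fin (m + 1)) (Fin (m + 1)) R) (i j : Fin (m + 1))
    (hI : ({i} : Finset (Fin (m + 1)))ᶜ.card = m)
    (hJ : ({j} : Finset (Fin (m + 1)))ᶜ.card = m) :
    matrixMinor M {i} {j} hI hJ = (M.submatrix i.succAbove j.succAbove).det :=
  matrixMinor_eq_det_submatrix M hI hJ (Fin.strictMono_succAbove i) (Fin.strictMono_succAbove j)
    (by simp [Fin.succAbove_ne]) (by simp [Fin.succAbove_ne])

theorem matrixMinor_succAbove_pair {m : ℕ} {R : Type*} [CommRing R]
    (M : Matrix (Fin (m + 2)) (Fin (m + 2)) R) (x : Fin (m + 2)) (a b : Fin (m + 1))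
    (hI : ({x.succAbove a, x} : Finset (Fin (m + 2)))ᶜ.card = m)
    (hJ : ({x.succAbove b, x} : Finset (Fin (m + 2)))ᶜ.card = m) :
    matrixMinor M {x.succAbove a, x} {x.succAbove b, x} hI hJ
      = ((M.submatrix x.succAbove x.succAbove).submatrix a.succAbove b.succAbove).det :=
  matrixMinor_eq_det_submatrix M hI hJ
    ((Fin.strictMono_succAbove x).comp (Fin.strictMono_succAbove a))
    ((Fin.strictMono_succAbove x).comp (Fin.strictMono_succAbove b))
    (by simp [Fin.succAbove_ne]) (by simp [Fin.succAbove_ne])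

theorem dodgson_identity_general {n : ℕ} {R : Type*} [CommRing R] (M : Matrix (Fin n) (Fin n) R)
    (a b x : Fin n) (hax : a < x) (hbx : b < x)
    (h1 : ({x} : Finset (Fin n))ᶜ.card = n - 1)
    (h2 : ({a} : Finset (Fin n))ᶜ.card = n - 1)
    (h3 : ({b} : Finset (Fin n))ᶜ.card = n - 1)
    (h4 : ({a, x} : Finset (Fin n))ᶜ.card = n - 2)
    (h5 : ({b, x} : Finset (Fin n))ᶜ.card = n - 2) :
    matrixMinor M {x} {x} h1 h1 * matrixMinor M {a} {b} h2 h3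
      - M.det * matrixMinor M {a, x} {b, x} h4 h5
      = matrixMinor M {x} {b} h1 h3 * matrixMinor M {a} {x} h2 h1 := by
  obtain ⟨m, rfl⟩ : ∃ m, n = m + 2 :=
    ⟨n - 2, by have := x.isLt; have : (a : ℕ) < x := hax; omega⟩
  obtain ⟨a, rfl⟩ := Fin.exists_succAbove_eq hax.ne
  obtain ⟨b, rfl⟩ := Fin.exists_succAbove_eq hbx.ne
  rw [matrixMinor_singleton, matrixMinor_singleton, matrixMinor_singleton, matrixMinor_singleton,
    matrixMinor_succAbove_pair]
  exact det_submatrix_succAbove_dodgson M hax hbx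

/-- The Dodgson / Desnanot–Jacobi identity: for distinct indices `a, b, x` (with signs fixed
by taking `a < x` and `b < x`),
`det M(x,x)·det M(a,b) − det M·det M({a,x},{b,x}) = det M(x,b)·det M(a,x)`. -/
theorem dodgson_identity {n : ℕ} {R : Type*} [CommRing R] (M : Matrix (Fin n) (Fin n) R)
    (a b x : Fin n) (hab : a ≠ b) (hax : a < x) (hbx : b < x)
    (h1 : ({x} : Finset (Fin n))ᶜ.card = n - 1)
    (h2 : ({a} : Finset (Fin n))ᶜ.card = n - 1)
    (h3 : ({b} : Finset (Fin n))ᶜ.card = n - 1)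
    (h4 : ({a, x} : Finset (Fin n))ᶜ.card = n - 2)
    (h5 : ({b, x} : Finset (Fin n))ᶜ.card = n - 2) :
    matrixMinor M {x} {x} h1 h1 * matrixMinor M {a} {b} h2 h3
      - M.det * matrixMinor M {a, x} {b, x} h4 h5
      = matrixMinor M {x} {b} h1 h3 * matrixMinor M {a} {x} h2 h1 :=
  dodgson_identity_general M a b x hax hbx h1 h2 h3 h4 h5
end

section
/- For a connected graph G with a 3-valent vertex whose incident edges are 1, 2, 3, the graph polynomial has the form Ψ_G = f₀(α₁α₂ + α₁α₃ + α₂α₃) + (f₁+f₂)α₃ + (f₂+f₃)α₁ + (f₁+f₃)α₂ + f₁₂₃, where f₀, f₁, f₂, f₃, f₁₂₃ are polynomials not involving α₁, α₂, α₃. -/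
open scoped Classical

/-- The set of edges of a simple graph, as a `Finset` of `Sym2 V`. -/
noncomputable def edgeFS {V : Type*} [Fintype V] [DecidableEq V] (G : SimpleGraph V) :
    Finset (Sym2 V) :=
  Finset.univ.filter (· ∈ G.edgeSet)

/-- The spanning trees of `G`, encoded as those subsets `T` of the edge set of `G`
for which the graph on `V` with edge set `T` is a tree. -/
noncomputable def spanningTrees {V : Type*} [Fintype V] [DecidableEq V] (G : SimpleGraph V) :
    Finset (Finset (Sym2 V)) :=
  (edgeFS G).powerset.filter (fun T => (SimpleGraph.fromEdgeSet (↑T : Set (Sym2 V))).IsTree)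

/-- The graph (Kirchhoff) polynomial `Ψ_G = Σ_T Π_{e ∉ T} α_e`, the sum running over the
spanning trees `T` of `G`; one variable `α_e` for each potential edge `e`. -/
noncomputable def graphPoly {V : Type*} [Fintype V] [DecidableEq V] (G : SimpleGraph V) :
    MvPolynomial (Sym2 V) ℤ :=
  ∑ T ∈ spanningTrees G, ∏ e ∈ edgeFS G \ T, MvPolynomial.X e


open MvPolynomial

/-!
A set `T` of edges of `G` splits into the edges `s(v, x)`, `x ∈ P`, for a set `P` of neighbours
of `v`, and a set `F` of edges of `G - v`; `T` is a spanning tree iff `F` is a spanning forest of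
`G - v` each of whose trees contains exactly one vertex of `P`. Grouping the trees by `P` writes
`Ψ_G = ∑_P (∏_{x ∉ P} α_{vx}) Φ_P` with forest polynomials `Φ_P` of `G - v`. At a 3-valent
vertex `Φ_∅ = 0`, the three `Φ_{x}` are all the spanning tree polynomial of `G - v`, and the
third neighbour `z` lies either in the tree of `x` or in that of `y` of a 2-forest rooted at
`x, y`, which splits `Φ_{x,y}` into two of the three 2-forest polynomials.
-/

namespace SimpleGraph

variable {V : Type*}

def starEmbedding (v : V) : V ↪ Sym2 V := ⟨fun x => s(v, x), fun _ _ => Sym2.congr_right.mp⟩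

@[simp] lemma starEmbedding_apply (v x : V) : starEmbedding v x = s(v, x) := rfl

@[simp] lemma mk_mem_map_starEmbedding {v x : V} {P : Finset V} :
    s(v, x) ∈ P.map (starEmbedding v) ↔ x ∈ P :=
  Finset.mem_map' _

def addStar (H : SimpleGraph V) (v : V) (P : Finset V) : SimpleGraph V :=
  H ⊔ fromEdgeSet ↑(P.map (starEmbedding v))

def IsRootedForest (H : SimpleGraph V) (v : V) (P : Finset V) : Prop :=
  H.IsAcyclic ∧ (P : Set V).Pairwise (fun x y => ¬ H.Reachable x y) ∧
    ∀ w ≠ v, ∃ x ∈ P, H.Reachable x w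

variable {H : SimpleGraph V} {v : V} {P : Finset V}

lemma addStar_adj {x y : V} :
    (H.addStar v P).Adj x y ↔ H.Adj x y ∨ x ≠ y ∧ ∃ u ∈ P, s(v, u) = s(x, y) := by
  simp [addStar, and_comm]

lemma addStar_insert [DecidableEq V] (y : V) :
    H.addStar v (insert y P) = H.addStar v P ⊔ edge v y := by
  rw [addStar, addStar, Finset.map_insert, Finset.coe_insert, Set.insert_eq, fromEdgeSet_union,
    starEmbedding_apply, edge]
  ac_rfl

lemma reachable_addStar_iff (hv : ∀ w, ¬ H.Adj v w) (hP : v ∉ P) {w : V} :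
    (H.addStar v P).Reachable v w ↔ w = v ∨ ∃ x ∈ P, H.Reachable x w := by
  constructor
  · rw [reachable_iff_reflTransGen]
    intro h
    induction h with
    | refl => exact Or.inl rfl
    | tail _ hadj ih =>
      rcases addStar_adj.mp hadj with hH | ⟨-, u, hu, huv⟩
      · obtain rfl | ⟨x, hx, hxy⟩ := ih
        · exact absurd hH (hv _)
        · exact Or.inr ⟨x, hx, hxy.trans hH.reachable⟩
      · rcases Sym2.eq_iff.mp huv with ⟨rfl, rfl⟩ | ⟨rfl, rfl⟩
        · exact Or.inr ⟨u, hu, .rfl⟩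
        · exact Or.inl rfl
  · rintro (rfl | ⟨x, hx, hxw⟩)
    · exact .rfl
    · have hvx : (H.addStar v P).Adj v x :=
        addStar_adj.mpr (Or.inr ⟨fun h => hP (h ▸ hx), x, hx, rfl⟩)
      exact hvx.reachable.trans (hxw.mono le_sup_left)

lemma isAcyclic_addStar_iff [DecidableEq V] (hv : ∀ w, ¬ H.Adj v w) (hP : v ∉ P) :
    (H.addStar v P).IsAcyclic ↔
      H.IsAcyclic ∧ (P : Set V).Pairwise (fun x y => ¬ H.Reachable x y) := by
  induction P using Finset.induction_on with
  | empty => simp [addStar]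
  | insert y P hyP ih =>
    have hvy : v ≠ y := fun h => hP (h ▸ Finset.mem_insert_self _ _)
    have hvP : v ∉ P := fun h => hP (Finset.mem_insert_of_mem h)
    have hnadj : ¬ (H.addStar v P).Adj v y := by
      rw [addStar_adj]
      rintro (h | ⟨-, u, hu, hvu⟩)
      exacts [hv _ h, hyP (Sym2.congr_right.mp hvu ▸ hu)]
    rw [addStar_insert, isAcyclic_sup_fromEdgeSet_iff, ih hvP, reachable_addStar_iff hv hvP,
      Finset.coe_insert, Set.pairwise_insert]
    simp only [hvy.symm, hnadj, or_false, false_or, reachable_comm]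
    grind

lemma connected_addStar_iff (hv : ∀ w, ¬ H.Adj v w) (hP : v ∉ P) :
    (H.addStar v P).Connected ↔ ∀ w ≠ v, ∃ x ∈ P, H.Reachable x w := by
  rw [connected_iff_exists_forall_reachable]
  constructor
  · rintro ⟨u, hu⟩ w hw
    exact ((reachable_addStar_iff hv hP).mp ((hu v).symm.trans (hu w))).resolve_left hw
  · exact fun h => ⟨v, fun w => (reachable_addStar_iff hv hP).mpr ((em (w = v)).imp id (h w))⟩

lemma isTree_addStar_iff [DecidableEq V] (hv : ∀ w, ¬ H.Adj v w) (hP : v ∉ P) :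
    (H.addStar v P).IsTree ↔ H.IsRootedForest v P := by
  rw [isTree_iff, connected_addStar_iff hv hP, isAcyclic_addStar_iff hv hP, IsRootedForest]
  tauto

lemma not_isRootedForest_empty {w : V} (hw : w ≠ v) : ¬ H.IsRootedForest v ∅ :=
  fun h => by simpa using h.2.2 w hw

lemma isRootedForest_singleton_congr {x y : V} (hx : x ≠ v) (hy : y ≠ v) :
    H.IsRootedForest v {x} ↔ H.IsRootedForest v {y} := by
  have reaches_all : ∀ {x y : V}, y ≠ v → (∀ w ≠ v, H.Reachable x w) →
      ∀ w ≠ v, H.Reachable y w :=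
    fun hy h w hw => (h _ hy).symm.trans (h w hw)
  simpa [IsRootedForest] using and_congr_right' ⟨reaches_all hy, reaches_all hx⟩

lemma isRootedForest_pair_iff [DecidableEq V] {x y : V} (hxy : x ≠ y) :
    H.IsRootedForest v {x, y} ↔
      H.IsAcyclic ∧ ¬ H.Reachable x y ∧ ∀ w ≠ v, H.Reachable x w ∨ H.Reachable y w := by
  simp [IsRootedForest, Set.pairwise_pair, hxy, reachable_comm]

lemma IsRootedForest.reachable_iff_not_reachable [DecidableEq V] {x y z : V}
    (h : H.IsRootedForest v {x, y}) (hxy : x ≠ y) (hz : z ≠ v) :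
    H.Reachable y z ↔ ¬ H.Reachable x z := by
  obtain ⟨-, hsep, hcover⟩ := (isRootedForest_pair_iff hxy).mp h
  exact ⟨fun hyz hxz => hsep (hxz.trans hyz.symm), (hcover z hz).resolve_left⟩

lemma isRootedForest_pair_congr_right [DecidableEq V] {x y z : V} (hyz : H.Reachable y z)
    (hxy : x ≠ y) (hxz : x ≠ z) : H.IsRootedForest v {x, y} ↔ H.IsRootedForest v {x, z} := by
  have hw : ∀ w, H.Reachable y w ↔ H.Reachable z w :=
    fun w => ⟨hyz.symm.trans, hyz.trans⟩
  simp only [isRootedForest_pair_iff hxy, isRootedForest_pair_iff hxz, reachable_comm (u := x), hw]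

end SimpleGraph

namespace MvPolynomial

variable {σ R : Type*} [CommSemiring R] [DecidableEq σ]

noncomputable def complementPoly (E : Finset σ) (p : Finset σ → Prop) : MvPolynomial σ R :=
  ∑ F ∈ E.powerset with p F, ∏ e ∈ E \ F, X e

variable {E : Finset σ} {p : Finset σ → Prop}

lemma complementPoly_congr {q : Finset σ → Prop} (h : ∀ F ⊆ E, p F ↔ q F) :
    (complementPoly E p : MvPolynomial σ R) = complementPoly E q := by
  rw [complementPoly, complementPoly,
    Finset.filter_congr fun F hF => h F (Finset.mem_powerset.mp hF)]

lemma complementPoly_eq_zero (h : ∀ F ⊆ E, ¬ p F) :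
    (complementPoly E p : MvPolynomial σ R) = 0 :=
  Finset.sum_eq_zero fun F hF => by
    obtain ⟨hFE, hpF⟩ := Finset.mem_filter.mp hF
    exact absurd hpF (h F (Finset.mem_powerset.mp hFE))

lemma complementPoly_eq_add (q : Finset σ → Prop) :
    (complementPoly E p : MvPolynomial σ R) =
      complementPoly E (fun F => p F ∧ q F) + complementPoly E (fun F => p F ∧ ¬ q F) := by
  simp only [complementPoly, ← Finset.filter_filter, Finset.sum_filter_add_sum_filter_not]

lemma degreeOf_complementPoly {i : σ} (hi : i ∉ E) :
    degreeOf i (complementPoly E p : MvPolynomial σ R) = 0 := by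
  refine Nat.eq_zero_of_le_zero ((degreeOf_sum_le _ _ _).trans (Finset.sup_le fun F _ => ?_))
  refine (degreeOf_prod_le _ _ _).trans (Finset.sum_eq_zero fun e he => ?_).le
  exact degreeOf_X_of_ne fun h => hi (h ▸ (Finset.mem_sdiff.mp he).1)

lemma complementPoly_union {A B : Finset σ} (h : Disjoint A B) :
    (complementPoly (A ∪ B) p : MvPolynomial σ R) =
      ∑ S ∈ B.powerset, (∏ e ∈ B \ S, X e) * complementPoly A (fun F => p (F ∪ S)) := by
  simp only [complementPoly, Finset.mul_sum, Finset.sum_filter, mul_ite, mul_zero]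
  rw [Finset.sum_comm, ← Finset.sum_product']
  symm
  refine Finset.sum_nbij' (fun x => x.1 ∪ x.2) (fun T => (T ∩ A, T ∩ B)) ?_ ?_ ?_ ?_ ?_
  · simp only [Finset.mem_product, Finset.mem_powerset, and_imp, Prod.forall]
    exact fun F S hF hS => Finset.union_subset_union hF hS
  · simp
  · simp only [Finset.mem_product, Finset.mem_powerset, and_imp, Prod.forall, Prod.mk.injEq]
    intro F S hF hS
    constructor <;> ext e <;> grind [Finset.disjoint_left]
  · intro T hT
    simp only [Finset.mem_powerset] at hT
    rw [← Finset.inter_union_distrib_left, Finset.inter_eq_left.mpr hT]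
  · simp only [Finset.mem_product, Finset.mem_powerset, and_imp, Prod.forall]
    intro F S hF hS
    have hsplit : (A ∪ B) \ (F ∪ S) = (A \ F) ∪ (B \ S) := by
      ext e; grind [Finset.disjoint_left]
    rw [hsplit, Finset.prod_union (h.mono Finset.sdiff_subset Finset.sdiff_subset), mul_comm]

end MvPolynomial

lemma Finset.powerset_map {α β : Type*} (f : α ↪ β) (s : Finset α) :
    (s.map f).powerset = s.powerset.map (Finset.mapEmbedding f).toEmbedding := by
  ext t
  simp [Finset.subset_map_iff, eq_comm]

section GraphPoly

open SimpleGraph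

variable {V : Type*} [Fintype V] [DecidableEq V]

lemma graphPoly_eq_complementPoly (G : SimpleGraph V) :
    graphPoly G = complementPoly (edgeFS G) (fun T => (fromEdgeSet (T : Set (Sym2 V))).IsTree) :=
  rfl

/-- In the notation of the statement, `forestPoly G v {c}` is `f₀ = Ψ_{G\{1,2}//3}` and
`forestPoly G v {a, b, c}` is `f₁₂₃ = Ψ_{G//{1,2,3}}`. -/
noncomputable def forestPoly (G : SimpleGraph V) (v : V) (P : Finset V) :
    MvPolynomial (Sym2 V) ℤ :=
  complementPoly (edgeFS (G.deleteIncidenceSet v))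
    (fun F => (fromEdgeSet (F : Set (Sym2 V))).IsRootedForest v P)

/-- Sum over the spanning 2-forests of `G - v` separating `x` from `y` and `z`; for `x` the end
of edge `i` this is the Dodgson polynomial `fᵢ` of the statement. -/
noncomputable def twoForestPoly (G : SimpleGraph V) (v x y z : V) : MvPolynomial (Sym2 V) ℤ :=
  complementPoly (edgeFS (G.deleteIncidenceSet v))
    (fun F => (fromEdgeSet (F : Set (Sym2 V))).IsRootedForest v {x, y} ∧
      (fromEdgeSet (F : Set (Sym2 V))).Reachable y z)

variable {G : SimpleGraph V} {v : V}

lemma mem_edgeFS {e : Sym2 V} : e ∈ edgeFS G ↔ e ∈ G.edgeSet := by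
  simp [edgeFS]

lemma mk_notMem_edgeFS_deleteIncidenceSet (x : V) :
    s(v, x) ∉ edgeFS (G.deleteIncidenceSet v) := by
  simp [mem_edgeFS, deleteIncidenceSet_adj]

lemma edgeFS_eq_union :
    edgeFS G = edgeFS (G.deleteIncidenceSet v) ∪ (G.neighborFinset v).map (starEmbedding v) := by
  ext e
  by_cases hv : v ∈ e
  · obtain ⟨x, rfl⟩ := Sym2.mem_iff_exists.mp hv
    simp only [Finset.mem_union, mk_mem_map_starEmbedding, mem_neighborFinset, mem_edgeFS,
      edgeSet_deleteIncidenceSet, Set.mem_sdiff, mk'_mem_incidenceSet_left_iff, mem_edgeSet]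
    tauto
  · have hstar : e ∉ (G.neighborFinset v).map (starEmbedding v) := by
      rintro hmem
      obtain ⟨x, -, rfl⟩ := Finset.mem_map.mp hmem
      exact hv (Sym2.mem_mk_left v x)
    simp [mem_edgeFS, edgeSet_deleteIncidenceSet, incidenceSet, hv, hstar]

lemma disjoint_edgeFS_deleteIncidenceSet :
    Disjoint (edgeFS (G.deleteIncidenceSet v)) ((G.neighborFinset v).map (starEmbedding v)) :=
  Finset.disjoint_left.mpr fun _ he hmem => by
    obtain ⟨x, -, rfl⟩ := Finset.mem_map.mp hmem
    exact mk_notMem_edgeFS_deleteIncidenceSet x he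

theorem graphPoly_eq_sum_forestPoly :
    graphPoly G = ∑ P ∈ (G.neighborFinset v).powerset,
      (∏ u ∈ G.neighborFinset v \ P, X s(v, u)) * forestPoly G v P := by
  rw [graphPoly_eq_complementPoly, edgeFS_eq_union, complementPoly_union
    disjoint_edgeFS_deleteIncidenceSet, Finset.powerset_map, Finset.sum_map]
  refine Finset.sum_congr rfl fun P hP => ?_
  have hvP : v ∉ P := fun h => G.notMem_neighborFinset_self v (Finset.mem_powerset.mp hP h)
  simp only [RelEmbedding.coe_toEmbedding, Finset.mapEmbedding_apply, ← Finset.map_sdiff,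
    Finset.prod_map, starEmbedding_apply]
  refine congrArg _ (complementPoly_congr fun F hF => ?_)
  have hv : ∀ w, ¬ (fromEdgeSet (F : Set (Sym2 V))).Adj v w :=
    fun w hvw => mk_notMem_edgeFS_deleteIncidenceSet w (hF hvw.1)
  rw [Finset.coe_union, fromEdgeSet_union]
  exact isTree_addStar_iff hv hvP

lemma graphPoly_eq_of_neighborFinset_eq {a b c : V} (hN : G.neighborFinset v = {a, b, c})
    (hab : a ≠ b) (hac : a ≠ c) (hbc : b ≠ c) :
    graphPoly G =
      X s(v, a) * (X s(v, b) * X s(v, c)) * forestPoly G v ∅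
        + X s(v, a) * X s(v, b) * forestPoly G v {c} + X s(v, a) * X s(v, c) * forestPoly G v {b}
        + X s(v, b) * X s(v, c) * forestPoly G v {a}
        + X s(v, a) * forestPoly G v {b, c} + X s(v, b) * forestPoly G v {a, c}
        + X s(v, c) * forestPoly G v {a, b} + forestPoly G v {a, b, c} := by
  have ha : a ∉ insert b (insert c (∅ : Finset V)) := by simp [hab, hac]
  have hb : b ∉ insert c (∅ : Finset V) := by simp [hbc]
  rw [graphPoly_eq_sum_forestPoly, hN, ← Finset.insert_empty]
  simp only [Finset.sdiff_eq_filter, Finset.prod_filter, Finset.sum_powerset_insert ha,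
    Finset.sum_powerset_insert hb, Finset.sum_powerset_insert (Finset.notMem_empty c),
    Finset.powerset_empty, Finset.sum_singleton]
  simp only [insert_empty_eq, Finset.notMem_empty, not_false_eq_true, ↓reduceIte,
    Finset.mem_insert, Finset.mem_singleton, Finset.prod_insert, Finset.prod_singleton, ite_not,
    mul_one, one_mul, not_or, and_self, not_true_eq_false, and_true, and_false, or_self,
    hab, hac, hbc, hab.symm, hac.symm, hbc.symm]
  ring

lemma forestPoly_empty {w : V} (hw : w ≠ v) : forestPoly G v ∅ = 0 :=
  complementPoly_eq_zero fun _ _ => not_isRootedForest_empty hw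

lemma forestPoly_singleton_congr {x y : V} (hx : x ≠ v) (hy : y ≠ v) :
    forestPoly G v {x} = forestPoly G v {y} :=
  complementPoly_congr fun _ _ => isRootedForest_singleton_congr hx hy

lemma forestPoly_pair {x y z : V} (hxy : x ≠ y) (hz : z ≠ v) :
    forestPoly G v {x, y} = twoForestPoly G v x y z + twoForestPoly G v y x z := by
  rw [forestPoly, complementPoly_eq_add (fun F => (fromEdgeSet (F : Set (Sym2 V))).Reachable y z)]
  refine congrArg _ (complementPoly_congr fun F _ => ?_)
  rw [Finset.pair_comm y x]
  exact and_congr_right fun h => (h.reachable_iff_not_reachable hxy hz).not_left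

lemma twoForestPoly_comm {x y z : V} (hxy : x ≠ y) (hxz : x ≠ z) :
    twoForestPoly G v x y z = twoForestPoly G v x z y :=
  complementPoly_congr fun _ _ =>
    ⟨fun ⟨h, hyz⟩ => ⟨(isRootedForest_pair_congr_right hyz hxy hxz).mp h, hyz.symm⟩,
      fun ⟨h, hzy⟩ => ⟨(isRootedForest_pair_congr_right hzy hxz hxy).mp h, hzy.symm⟩⟩

end GraphPoly

theorem graphPoly_three_valent_structure_general {V : Type*} [Fintype V] [DecidableEq V]
    (G : SimpleGraph V) (v a b c : V)
    (hnbrs : G.neighborSet v = {a, b, c}) (hab : a ≠ b) (hac : a ≠ c) (hbc : b ≠ c) :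
    ∃ f0 f1 f2 f3 f123 : MvPolynomial (Sym2 V) ℤ,
      (∀ f ∈ [f0, f1, f2, f3, f123], ∀ e ∈ [s(v, a), s(v, b), s(v, c)],
        MvPolynomial.degreeOf e f = 0) ∧
      graphPoly G =
        f0 * (X s(v, a) * X s(v, b) + X s(v, a) * X s(v, c) + X s(v, b) * X s(v, c))
          + (f1 + f2) * X s(v, c) + (f2 + f3) * X s(v, a) + (f1 + f3) * X s(v, b)
          + f123 := by
  have hN : G.neighborFinset v = {a, b, c} := by
    ext w
    rw [SimpleGraph.mem_neighborFinset, ← SimpleGraph.mem_neighborSet, hnbrs]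
    simp
  have hne : ∀ x ∈ ({a, b, c} : Finset V), x ≠ v := fun x hx =>
    ((G.mem_neighborFinset v x).mp (hN ▸ hx)).ne'
  have hva : a ≠ v := hne a (by simp)
  have hvb : b ≠ v := hne b (by simp)
  have hvc : c ≠ v := hne c (by simp)
  refine ⟨forestPoly G v {c}, twoForestPoly G v a b c, twoForestPoly G v b a c,
    twoForestPoly G v c a b, forestPoly G v {a, b, c}, ?_, ?_⟩
  · intro f hf e he
    simp only [List.mem_cons, List.not_mem_nil, or_false] at hf he
    rcases he with rfl | rfl | rfl <;> rcases hf with rfl | rfl | rfl | rfl | rfl <;>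
      exact degreeOf_complementPoly (mk_notMem_edgeFS_deleteIncidenceSet _)
  · rw [graphPoly_eq_of_neighborFinset_eq hN hab hac hbc, forestPoly_empty hva,
      forestPoly_singleton_congr hva hvc, forestPoly_singleton_congr hvb hvc,
      forestPoly_pair hab hvc, forestPoly_pair hac hvb, forestPoly_pair hbc hva,
      twoForestPoly_comm hac hab, twoForestPoly_comm hbc hab.symm,
      twoForestPoly_comm hbc.symm hac.symm]
    ring

/-- Structure of the graph polynomial at a 3-valent vertex: if `G` is connected with a vertex
`v` of degree 3 whose incident edges are `e₁ = va`, `e₂ = vb`, `e₃ = vc`, then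
`Ψ_G = f₀(α₁α₂ + α₁α₃ + α₂α₃) + (f₁+f₂)α₃ + (f₂+f₃)α₁ + (f₁+f₃)α₂ + f₁₂₃` for some
polynomials `f₀, f₁, f₂, f₃, f₁₂₃` not involving the variables `α₁, α₂, α₃`. -/
theorem graphPoly_three_valent_structure {V : Type*} [Fintype V] [DecidableEq V]
    (G : SimpleGraph V) (hconn : G.Connected) (v a b c : V)
    (hnbrs : G.neighborSet v = {a, b, c}) (hab : a ≠ b) (hac : a ≠ c) (hbc : b ≠ c) :
    ∃ f0 f1 f2 f3 f123 : MvPolynomial (Sym2 V) ℤ,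
      (∀ f ∈ [f0, f1, f2, f3, f123], ∀ e ∈ [s(v, a), s(v, b), s(v, c)],
        MvPolynomial.degreeOf e f = 0) ∧
      graphPoly G =
        f0 * (X s(v, a) * X s(v, b) + X s(v, a) * X s(v, c) + X s(v, b) * X s(v, c))
          + (f1 + f2) * X s(v, c) + (f2 + f3) * X s(v, a) + (f1 + f3) * X s(v, b)
          + f123 :=
  graphPoly_three_valent_structure_general G v a b c hnbrs hab hac hbc
end

section
/- If f₀f₁₂₃ = f₁f₂ + f₁f₃ + f₂f₃, then the ideal (f₀, f₁+f₃) has the same radical as the ideal (f₀, f₁, f₃); equivalently V(f₀, f₁+f₃) = V(f₀, f₁, f₃) as sets. -/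
namespace Ideal

variable {R : Type*} [CommRing R] {I : Ideal R} {a b : R}

theorem mem_radical_of_add_mem_of_mul_mem (hadd : a + b ∈ I) (hmul : a * b ∈ I) :
    a ∈ I.radical :=
  ⟨2, by
    rw [show a ^ 2 = a * (a + b) - a * b by ring]
    exact I.sub_mem (I.mul_mem_left a hadd) hmul⟩

end Ideal

/-- If `f₀f₁₂₃ = f₁f₂ + f₁f₃ + f₂f₃` in a commutative ring, then the ideal `(f₀, f₁+f₃)` has
the same radical as `(f₀, f₁, f₃)`; equivalently `V(f₀, f₁+f₃) = V(f₀, f₁, f₃)` as sets. -/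
theorem radical_f0_f1_add_f3 {R : Type*} [CommRing R] (f0 f1 f2 f3 f123 : R)
    (h : f0 * f123 = f1 * f2 + f1 * f3 + f2 * f3) :
    (Ideal.span ({f0, f1 + f3} : Set R)).radical =
      (Ideal.span ({f0, f1, f3} : Set R)).radical := by
  set I := Ideal.span ({f0, f1 + f3} : Set R)
  have hf0 : f0 ∈ I := Ideal.subset_span (by simp)
  have hsum : f1 + f3 ∈ I := Ideal.subset_span (by simp)
  have hprod : f1 * f3 ∈ I := by
    rw [show f1 * f3 = f123 * f0 - f2 * (f1 + f3) by linear_combination -h]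
    exact I.sub_mem (I.mul_mem_left _ hf0) (I.mul_mem_left _ hsum)
  have hf1 : f1 ∈ I.radical := Ideal.mem_radical_of_add_mem_of_mul_mem hsum hprod
  have hf3 : f3 ∈ I.radical :=
    Ideal.mem_radical_of_add_mem_of_mul_mem (add_comm f1 f3 ▸ hsum) (mul_comm f1 f3 ▸ hprod)
  refine le_antisymm (Ideal.radical_mono ?_) (Ideal.radical_le_radical_iff.mpr ?_)
  · rw [Ideal.span_le, Set.insert_subset_iff, Set.singleton_subset_iff]
    exact ⟨Ideal.subset_span (by simp),
      Ideal.add_mem _ (Ideal.subset_span (by simp)) (Ideal.subset_span (by simp))⟩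
  · rw [Ideal.span_le, Set.insert_subset_iff, Set.insert_subset_iff, Set.singleton_subset_iff]
    exact ⟨Ideal.le_radical hf0, hf1, hf3⟩
end
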